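/- arXiv:1307.6591 — 5 statements merged into one kernel-verified Lean document; each statement's English description precedes it below -/
import Mathlib

section
/- Every maximal isotropic subgroup meeting the factors trivially is the graph of an antisymplectic map: let X and Y be isomorphic finite abelian groups equipped with symplectic forms ω_X and ω_Y, and let Z be a maximal isotropic subgroup of X ⊕ Y (with respect to the form ω_X + ω_Y) such that Z ∩ (X ⊕ 0) = {0} and Z ∩ (0 ⊕ Y) = {0}. Then the projections π_X : Z → X and π_Y : Z → Y are bijective, the map π_Y ∘ π_X⁻¹ : X → Y is an antisymplectic group homomorphism, and Z is its graph. -/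
/-- A symplectic form on a finite abelian group, valued in ℚ/ℤ :
ℤ-bilinear, alternating and nondegenerate. -/
structure IsSymplecticForm {X : Type*} [AddCommGroup X]
    (ω : X → X → AddCircle (1 : ℚ)) : Prop where
  add_left : ∀ x x' y : X, ω (x + x') y = ω x y + ω x' y
  add_right : ∀ x y y' : X, ω x (y + y') = ω x y + ω x y'
  alternating : ∀ x : X, ω x x = 0
  nondeg : ∀ x : X, (∀ y : X, ω x y = 0) → x = 0

/-- A subgroup is isotropic for `ω` if `ω` vanishes identically on it. -/
def IsIsotropic {G : Type*} [AddCommGroup G]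
    (ω : G → G → AddCircle (1 : ℚ)) (H : AddSubgroup G) : Prop :=
  ∀ x ∈ H, ∀ y ∈ H, ω x y = 0

/-- A maximal isotropic subgroup: isotropic and not properly contained in any
isotropic subgroup. -/
def IsMaximalIsotropic {G : Type*} [AddCommGroup G]
    (ω : G → G → AddCircle (1 : ℚ)) (H : AddSubgroup G) : Prop :=
  IsIsotropic ω H ∧ ∀ K : AddSubgroup G, IsIsotropic ω K → H ≤ K → K = H

/-!
Maximality forces `Z` to contain its orthogonal: if `g ⊥ Z`, then `Z + ⟨g⟩` is still isotropic.
Hence pairing against `Z` embeds every subgroup `H` with `Z ∩ H = 0` into the `ℚ/ℤ`-dual of `Z`,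
which has the same order as `Z`. Applied to both factors, and combined with the injectivity of the
projections `Z → X` and `Z → Y`, this gives `|X| ≤ |Z| ≤ |Y| ≤ |Z| ≤ |X|`. So both projections
are bijective, `Z` is the graph of `π_Y ∘ π_X⁻¹`, and this map is antisymplectic because `Z` is
isotropic.
-/

open Multiplicative

instance AddCircle.hasEnoughRootsOfUnity_rat (n : ℕ) [NeZero n] :
    HasEnoughRootsOfUnity (Multiplicative (AddCircle (1 : ℚ))) n := by
  have hn : 0 < n := NeZero.pos n
  have hζ : IsPrimitiveRoot (ofAdd ((1 / n : ℚ) : AddCircle (1 : ℚ))) n := by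
    rw [IsPrimitiveRoot.iff_orderOf, orderOf_ofAdd_eq_addOrderOf,
      AddCircle.addOrderOf_period_div hn]
  refine ⟨⟨_, hζ⟩, ⟨hζ.toRootsOfUnity, fun x => ?_⟩⟩
  have hx : n • toAdd (x : (Multiplicative (AddCircle (1 : ℚ)))ˣ).val = 0 := by
    rw [← toAdd_pow, ← Units.val_pow_eq_pow_val, (mem_rootsOfUnity _ _).1 x.2]; rfl
  obtain ⟨m, -, hm⟩ := (AddCircle.nsmul_eq_zero_iff hn).1 hx
  refine ⟨m, Subtype.ext (Units.ext ?_)⟩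
  simp only [IsPrimitiveRoot.toRootsOfUnity, zpow_natCast, SubmonoidClass.coe_pow,
    Units.val_pow_eq_pow_val, rootsOfUnity.val_mkOfPowEq_coe]
  rw [← ofAdd_nsmul, ← AddCircle.coe_nsmul,
    ← ofAdd_toAdd (x : (Multiplicative (AddCircle (1 : ℚ)))ˣ).val, ← hm, nsmul_eq_mul, mul_one,
    mul_one_div]

def AddMonoidHom.toMultiplicativeUnits (A B : Type*) [AddCommGroup A] [AddCommGroup B] :
    (A →+ B) ≃ (Multiplicative A →* (Multiplicative B)ˣ) :=
  AddMonoidHom.toMultiplicative.trans (MulEquiv.monoidHomCongrRight toUnits).toEquiv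

instance AddCircle.finite_addMonoidHom_rat (A : Type*) [AddCommGroup A] [Finite A] :
    Finite (A →+ AddCircle (1 : ℚ)) :=
  .of_equiv _ (AddMonoidHom.toMultiplicativeUnits _ _).symm

theorem AddCircle.natCard_addMonoidHom_rat (A : Type*) [AddCommGroup A] [Finite A] :
    Nat.card (A →+ AddCircle (1 : ℚ)) = Nat.card A :=
  (Nat.card_congr (AddMonoidHom.toMultiplicativeUnits _ _)).trans
    (CommGroup.card_monoidHom_of_hasEnoughRootsOfUnity (Multiplicative A) _)

namespace IsSymplecticForm

variable {G : Type*} [AddCommGroup G] {ω : G → G → AddCircle (1 : ℚ)}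

def toAddMonoidHom (hω : IsSymplecticForm ω) : G →+ G →+ AddCircle (1 : ℚ) :=
  AddMonoidHom.mk' (fun x => AddMonoidHom.mk' (ω x) (hω.add_right x))
    fun x x' => AddMonoidHom.ext (hω.add_left x x')

@[simp]
theorem toAddMonoidHom_apply (hω : IsSymplecticForm ω) (x y : G) :
    hω.toAddMonoidHom x y = ω x y :=
  rfl

theorem zero_right (hω : IsSymplecticForm ω) (x : G) : ω x 0 = 0 :=
  map_zero (hω.toAddMonoidHom x)

theorem swap (hω : IsSymplecticForm ω) (x y : G) : ω y x = -ω x y := by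
  have h := hω.alternating (x + y)
  rw [hω.add_left, hω.add_right, hω.add_right, hω.alternating, hω.alternating, zero_add,
    add_zero] at h
  exact eq_neg_of_add_eq_zero_right h

theorem prod {X Y : Type*} [AddCommGroup X] [AddCommGroup Y] {ωX : X → X → AddCircle (1 : ℚ)}
    {ωY : Y → Y → AddCircle (1 : ℚ)} (hωX : IsSymplecticForm ωX) (hωY : IsSymplecticForm ωY) :
    IsSymplecticForm fun p q : X × Y => ωX p.1 q.1 + ωY p.2 q.2 where
  add_left p p' q := by simp only [Prod.fst_add, Prod.snd_add, hωX.add_left, hωY.add_left]; abel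
  add_right p q q' := by simp only [Prod.fst_add, Prod.snd_add, hωX.add_right, hωY.add_right]; abel
  alternating p := by simp only [hωX.alternating, hωY.alternating, add_zero]
  nondeg p hp := by
    refine Prod.ext (hωX.nondeg _ fun x => ?_) (hωY.nondeg _ fun y => ?_)
    · simpa [hωY.zero_right] using hp (x, 0)
    · simpa [hωX.zero_right] using hp (0, y)

end IsSymplecticForm

namespace IsMaximalIsotropic

variable {G : Type*} [AddCommGroup G] {ω : G → G → AddCircle (1 : ℚ)} {Z : AddSubgroup G}

theorem mem_of_forall_eq_zero (hω : IsSymplecticForm ω) (hZ : IsMaximalIsotropic ω Z) {g : G}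
    (hg : ∀ z ∈ Z, ω g z = 0) : g ∈ Z := by
  suffices hK : IsIsotropic ω (Z ⊔ AddSubgroup.zmultiples g) by
    rw [← hZ.2 _ hK le_sup_left]
    exact AddSubgroup.mem_sup_right (AddSubgroup.mem_zmultiples g)
  intro u hu v hv
  obtain ⟨z, hz, _, ⟨m, rfl⟩, rfl⟩ := AddSubgroup.mem_sup.1 hu
  obtain ⟨z', hz', _, ⟨m', rfl⟩, rfl⟩ := AddSubgroup.mem_sup.1 hv
  rw [← hω.toAddMonoidHom_apply]
  simp only [map_add, map_zsmul, AddMonoidHom.add_apply, AddMonoidHom.zsmul_apply,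
    hω.toAddMonoidHom_apply, hZ.1 z hz z' hz', hg z' hz', hω.swap g z, hg z hz,
    hω.alternating, neg_zero, smul_zero, add_zero]

theorem natCard_le_of_inf_eq_bot [Finite G] (hω : IsSymplecticForm ω) (hZ : IsMaximalIsotropic ω Z)
    {H : AddSubgroup G} (hH : Z ⊓ H = ⊥) : Nat.card H ≤ Nat.card Z := by
  let pairing : H →+ Z →+ AddCircle (1 : ℚ) :=
    (hω.toAddMonoidHom.compl₂ Z.subtype).comp H.subtype
  have hinj : Function.Injective pairing := by
    rw [injective_iff_map_eq_zero]
    intro h hh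
    have hmem : (h : G) ∈ Z ⊓ H :=
      ⟨hZ.mem_of_forall_eq_zero hω fun z hz => DFunLike.congr_fun hh ⟨z, hz⟩, h.2⟩
    rw [hH, AddSubgroup.mem_bot] at hmem
    exact Subtype.ext hmem
  calc Nat.card H ≤ Nat.card (Z →+ AddCircle (1 : ℚ)) := Nat.card_le_card_of_injective _ hinj
    _ = Nat.card Z := AddCircle.natCard_addMonoidHom_rat Z

end IsMaximalIsotropic

namespace AddSubgroup

variable {X Y : Type*} [AddCommGroup X] [AddCommGroup Y]

theorem natCard_prod_bot_top :
    Nat.card ((⊥ : AddSubgroup X).prod (⊤ : AddSubgroup Y)) = Nat.card Y := by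
  rw [Nat.card_congr (prodEquiv _ _).toEquiv, Nat.card_prod, card_bot, card_top, one_mul]

theorem natCard_prod_top_bot :
    Nat.card ((⊤ : AddSubgroup X).prod (⊥ : AddSubgroup Y)) = Nat.card X := by
  rw [Nat.card_congr (prodEquiv _ _).toEquiv, Nat.card_prod, card_bot, card_top, mul_one]

variable {Z : AddSubgroup (X × Y)}

theorem injective_fst_of_inf_prod_bot_top_eq_bot (hZ : Z ⊓ (⊥ : AddSubgroup X).prod ⊤ = ⊥) :
    Function.Injective fun z : Z => (z : X × Y).1 := by
  refine (injective_iff_map_eq_zero ((AddMonoidHom.fst X Y).comp Z.subtype)).2 fun z hz => ?_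
  have hmem : (z : X × Y) ∈ Z ⊓ (⊥ : AddSubgroup X).prod ⊤ := ⟨z.2, hz, trivial⟩
  rw [hZ, mem_bot] at hmem
  exact Subtype.ext hmem

theorem injective_snd_of_inf_prod_top_bot_eq_bot (hZ : Z ⊓ (⊤ : AddSubgroup X).prod ⊥ = ⊥) :
    Function.Injective fun z : Z => (z : X × Y).2 := by
  refine (injective_iff_map_eq_zero ((AddMonoidHom.snd X Y).comp Z.subtype)).2 fun z hz => ?_
  have hmem : (z : X × Y) ∈ Z ⊓ (⊤ : AddSubgroup X).prod ⊥ := ⟨z.2, trivial, hz⟩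
  rw [hZ, mem_bot] at hmem
  exact Subtype.ext hmem

variable (Z) (hZ : Function.Bijective fun z : Z => (z : X × Y).1)

noncomputable def graphHom : X →+ Y :=
  ((AddMonoidHom.snd X Y).comp Z.subtype).comp
    (AddEquiv.ofBijective ((AddMonoidHom.fst X Y).comp Z.subtype) hZ).symm.toAddMonoidHom

theorem mem_iff_graphHom_fst_eq_snd (p : X × Y) : p ∈ Z ↔ Z.graphHom hZ p.1 = p.2 := by
  let e := AddEquiv.ofBijective ((AddMonoidHom.fst X Y).comp Z.subtype) hZ
  change p ∈ Z ↔ ((e.symm p.1 : Z) : X × Y).2 = p.2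
  constructor
  · intro hp
    rw [show e.symm p.1 = ⟨p, hp⟩ from e.symm_apply_eq.2 rfl]
  · intro hp
    have hsymm : ((e.symm p.1 : Z) : X × Y) = p := Prod.ext (e.apply_symm_apply p.1) hp
    exact hsymm ▸ (e.symm p.1).2

theorem graphHom_apply_eq_invFun (x : X) :
    Z.graphHom hZ x = ((Function.invFun (fun z : Z => (z : X × Y).1) x : Z) : X × Y).2 := by
  set z := Function.invFun (fun z : Z => (z : X × Y).1) x
  have hfst : (z : X × Y).1 = x := Function.invFun_eq (hZ.2 x)
  have hgraph := (Z.mem_iff_graphHom_fst_eq_snd hZ z).1 z.2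
  rwa [hfst] at hgraph

end AddSubgroup

theorem maximal_isotropic_is_graph_of_antisymplectic_general
    {X Y : Type*} [AddCommGroup X] [AddCommGroup Y] [Fintype X] [Fintype Y]
    (ωX : X → X → AddCircle (1 : ℚ)) (ωY : Y → Y → AddCircle (1 : ℚ))
    (hωX : IsSymplecticForm ωX) (hωY : IsSymplecticForm ωY)
    (Z : AddSubgroup (X × Y))
    (hZ : IsMaximalIsotropic (fun p q : X × Y => ωX p.1 q.1 + ωY p.2 q.2) Z)
    (hZX : Z ⊓ AddSubgroup.prod ⊤ ⊥ = ⊥)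
    (hZY : Z ⊓ AddSubgroup.prod ⊥ ⊤ = ⊥) :
    Function.Bijective (fun z : Z => (z : X × Y).1) ∧
    Function.Bijective (fun z : Z => (z : X × Y).2) ∧
    ∃ f : X →+ Y,
      (∀ x x' : X, ωY (f x) (f x') = - ωX x x') ∧
      (∀ x : X, f x = ((Function.invFun (fun z : Z => (z : X × Y).1) x : Z) : X × Y).2) ∧
      (∀ p : X × Y, p ∈ Z ↔ f p.1 = p.2) := by
  have hω := hωX.prod hωY
  have injX := AddSubgroup.injective_fst_of_inf_prod_bot_top_eq_bot hZY
  have injY := AddSubgroup.injective_snd_of_inf_prod_top_bot_eq_bot hZX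
  have cardZX := Nat.card_le_card_of_injective _ injX
  have cardZY := Nat.card_le_card_of_injective _ injY
  have cardYZ := hZ.natCard_le_of_inf_eq_bot hω hZY
  have cardXZ := hZ.natCard_le_of_inf_eq_bot hω hZX
  rw [AddSubgroup.natCard_prod_bot_top] at cardYZ
  rw [AddSubgroup.natCard_prod_top_bot] at cardXZ
  have bijX := (Nat.bijective_iff_injective_and_card _).2 ⟨injX, by omega⟩
  have bijY := (Nat.bijective_iff_injective_and_card _).2 ⟨injY, by omega⟩
  have hgraph := Z.mem_iff_graphHom_fst_eq_snd bijX
  refine ⟨bijX, bijY, Z.graphHom bijX, fun x x' => ?_, Z.graphHom_apply_eq_invFun bijX, hgraph⟩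
  exact eq_neg_of_add_eq_zero_right (hZ.1 _ ((hgraph (x, _)).2 rfl) _ ((hgraph (x', _)).2 rfl))

/-- Every maximal isotropic subgroup of `X ⊕ Y` meeting both factors trivially
is the graph of an antisymplectic map: the two projections from `Z` are
bijective and `Z` is the graph of an antisymplectic homomorphism
`π_Y ∘ π_X⁻¹ : X → Y`. -/
theorem maximal_isotropic_is_graph_of_antisymplectic
    {X Y : Type*} [AddCommGroup X] [AddCommGroup Y] [Fintype X] [Fintype Y]
    (hiso : Nonempty (X ≃+ Y))
    (ωX : X → X → AddCircle (1 : ℚ)) (ωY : Y → Y → AddCircle (1 : ℚ))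
    (hωX : IsSymplecticForm ωX) (hωY : IsSymplecticForm ωY)
    (Z : AddSubgroup (X × Y))
    (hZ : IsMaximalIsotropic (fun p q : X × Y => ωX p.1 q.1 + ωY p.2 q.2) Z)
    (hZX : Z ⊓ AddSubgroup.prod ⊤ ⊥ = ⊥)
    (hZY : Z ⊓ AddSubgroup.prod ⊥ ⊤ = ⊥) :
    Function.Bijective (fun z : Z => (z : X × Y).1) ∧
    Function.Bijective (fun z : Z => (z : X × Y).2) ∧
    ∃ f : X →+ Y,
      (∀ x x' : X, ωY (f x) (f x') = - ωX x x') ∧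
      (∀ x : X, f x = ((Function.invFun (fun z : Z => (z : X × Y).1) x : Z) : X × Y).2) ∧
      (∀ p : X × Y, p ∈ Z ↔ f p.1 = p.2) :=
  maximal_isotropic_is_graph_of_antisymplectic_general ωX ωY hωX hωY Z hZ hZX hZY
end

section
/- (Embedding part of the main theorem on equations for the generalised Humbert locus.) Let g, k be integers with 0 < k and 2k ≤ g, and let d₁, …, d_k be positive integers with d_i dividing d_{i+1} for i = 1, …, k−1. Let Z = (z_{ij}) ∈ ℍ_g satisfy the linear equations z_{ij} = d_i · z_{(g+1−i) j} for all 1 ≤ i, j ≤ k, and z_{ij} = 0 for all k+1 ≤ i ≤ g−k and 1 ≤ j ≤ k. Let Z_M = (z_{ij})_{1 ≤ i,j ≤ k} be the upper-left k×k block of Z, let Λ_M ⊆ ℂ^k be the subgroup generated over ℤ by the k columns of Z_M together with the vectors d_j e_j (j = 1, …, k), and define the ℂ-linear map ι : ℂ^k → ℂ^g by ι(x)_i = x_i and ι(x)_{g+1−i} = x_i / d_i for 1 ≤ i ≤ k, and all other coordinates of ι(x) equal to 0. Then ι is injective, and for every x ∈ ℂ^k one has ι(x) ∈ Λ_Z if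 and only if x ∈ Λ_M (in particular ι(Λ_M) ⊆ Λ_Z, so ι induces an injective homomorphism ℂ^k/Λ_M → ℂ^g/Λ_Z of complex tori). -/
/-!
The equations on `Z` say exactly that the first `k` columns of `Z` are the images under `ι` of
the columns of `Z_M`; since moreover `ι(d_j e_j) = d_j e_j + e_{g+1-j}`, `ι` maps `Λ_M` into
`Λ_Z`.

Conversely let `ι(x) = Z a + b` with `a, b` integral. Taking imaginary parts, `Y a ∈ ι(ℝ^k)`
for the symmetric invertible matrix `Y = Im Z`. Let `E` be the inclusion of the first `k`
coordinates and `J` the matrix of `ι`, so that `EᵀE = EᵀJ = 1` and `Y E = J Y_M`. The part `v`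
of `a` outside the first `k` coordinates still has `Y v = J y` for some `y`, and by `Yᵀ = Y`
the vector `p = E Jᵀ v` satisfies `Y p = J Y_M Jᵀ v = J y = Y v`. Hence `v = p`, and
`Eᵀ v = 0` gives `Jᵀ v = 0`, so `v = 0`. Now `b = ι(x - Z_M a)` is integral, which at the
coordinates `g+1-i` says `x - Z_M a ∈ D ℤ^k`.
-/

open Matrix

namespace Matrix

theorem mulVec_eq_map_submatrix_mulVec {m n K : Type*} [Fintype m] [Fintype n]
    [CommSemiring K] {Z : Matrix n n K} {e : m → n} (he : Function.Injective e)
    (ι : (m → K) →ₗ[K] n → K)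
    (hZι : ∀ j, ι (fun i => Z (e i) (e j)) = fun r => Z r (e j))
    {a : n → K} (ha : ∀ r ∉ Set.range e, a r = 0) :
    Z *ᵥ a = ι (Z.submatrix e e *ᵥ (a ∘ e)) := by
  simp only [mulVec_eq_sum, op_smul_eq_smul, map_sum, map_smul]
  refine (Fintype.sum_of_injective e he _ _ (fun r hr => by simp [ha r hr]) fun i => ?_).symm
  rw [Function.comp_apply]
  congr 1
  exact hZι i

variable {m n K : Type*} [Fintype m] [Fintype n] [DecidableEq m] [DecidableEq n] [CommRing K]

theorem eq_zero_of_mulVec_mem_range_of_transpose_mul_eq_one {Y : Matrix n n K} (hYs : Y.IsSymm)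
    (hYu : IsUnit Y) {E J : Matrix n m K} (hEE : Eᵀ * E = 1) (hEJ : Eᵀ * J = 1)
    (hYE : Y * E = J * (Eᵀ * Y * E)) {v : n → K} (hv : Eᵀ *ᵥ v = 0)
    (hYv : Y *ᵥ v ∈ Set.range J.mulVec) : v = 0 := by
  obtain ⟨y, hy⟩ := hYv
  have hEY : Eᵀ * Y = (Eᵀ * Y * E) * Jᵀ := by
    simpa [Matrix.transpose_mul, hYs.eq, Matrix.mul_assoc] using congrArg transpose hYE
  have hy' : y = (Eᵀ * Y * E) *ᵥ (Jᵀ *ᵥ v) := by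
    rw [mulVec_mulVec, ← hEY, ← mulVec_mulVec, ← hy, mulVec_mulVec, hEJ, one_mulVec]
  have hp : E *ᵥ (Jᵀ *ᵥ v) = v := by
    apply mulVec_injective_of_isUnit hYu
    rw [mulVec_mulVec, hYE, ← mulVec_mulVec, ← hy', hy]
  have hJv : Jᵀ *ᵥ v = 0 := by
    rw [← one_mulVec (Jᵀ *ᵥ v), ← hEE, ← mulVec_mulVec, hp, hv]
  rw [← hp, hJv, mulVec_zero]

theorem apply_eq_zero_of_mulVec_mem_range {Y : Matrix n n K} (hYs : Y.IsSymm) (hYu : IsUnit Y)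
    {e : m → n} (he : Function.Injective e) (ι : (m → K) →ₗ[K] n → K)
    (hι : ∀ x, ι x ∘ e = x)
    (hYι : ∀ j, ι (fun i => Y (e i) (e j)) = fun r => Y r (e j))
    {a : n → K} (ha : Y *ᵥ a ∈ Set.range ι) {r : n} (hr : r ∉ Set.range e) : a r = 0 := by
  set E : Matrix n m K := (1 : Matrix n n K).submatrix id e
  set J := LinearMap.toMatrix' ι
  have hEE : Eᵀ * E = 1 := by
    ext i j; simp [E, mul_apply, one_apply, he.eq_iff]
  have hEJ : Eᵀ * J = 1 := by
    ext i j
    simpa [E, J, mul_apply, one_apply, LinearMap.toMatrix'_apply, Pi.single_apply, eq_comm]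
      using congrFun (hι (Pi.single j 1)) i
  have hYM : Eᵀ * Y * E = Y.submatrix e e := by
    ext i j; simp [E, mul_apply, one_apply]
  have hYE : Y * E = J * (Eᵀ * Y * E) := by
    rw [hYM]
    ext r j
    simp only [E, mul_apply, submatrix_apply, id, one_apply, mul_ite, mul_one, mul_zero,
      Finset.sum_ite_eq', Finset.mem_univ, if_true]
    exact (congrFun (hYι j) r).symm.trans (congrFun (LinearMap.toMatrix'_mulVec ι _) r).symm
  obtain ⟨y, hy⟩ := ha
  have hv := eq_zero_of_mulVec_mem_range_of_transpose_mul_eq_one hYs hYu hEE hEJ hYE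
    (v := a - E *ᵥ (Eᵀ *ᵥ a)) (by rw [mulVec_sub, mulVec_mulVec, hEE, one_mulVec, sub_self])
    ⟨y - (Eᵀ * Y * E) *ᵥ (Eᵀ *ᵥ a), by
      rw [mulVec_sub, mulVec_sub, mulVec_mulVec, ← hYE, ← mulVec_mulVec,
        LinearMap.toMatrix'_mulVec, hy]⟩
  rw [sub_eq_zero.mp (congrFun hv r)]
  exact Finset.sum_eq_zero fun i _ => by
    simp [E, show r ≠ e i from fun h => hr ⟨i, h.symm⟩]

end Matrix

theorem Fin.exists_castLE_eq_or_middle_or_exists_rev_castLE_eq {g k : ℕ} (hk : k ≤ g)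
    (r : Fin g) :
    (∃ i : Fin k, Fin.castLE hk i = r) ∨ (k ≤ r ∧ (r : ℕ) < g - k) ∨
      ∃ i : Fin k, (Fin.castLE hk i).rev = r := by
  rcases lt_or_ge (r : ℕ) k with h₁ | h₁
  · exact Or.inl ⟨⟨r, h₁⟩, rfl⟩
  rcases lt_or_ge (r : ℕ) (g - k) with h₂ | h₂
  · exact Or.inr (Or.inl ⟨h₁, h₂⟩)
  refine Or.inr (Or.inr ⟨⟨g - 1 - r, by omega⟩, Fin.ext ?_⟩)
  simp only [Fin.castLE_mk, Fin.val_rev]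
  omega

-- Indices are 0-based, so the paper's pairing `i ↔ g+1-i` becomes `i ↔ g-1-i`, i.e. `Fin.rev`.
def humbertEmbedding (K : Type*) [Field K] {k : ℕ} (g : ℕ) (d : ℕ → ℕ) :
    (Fin k → K) →ₗ[K] Fin g → K where
  toFun x r :=
    if hr : (r : ℕ) < k then x ⟨r, hr⟩
    else if hr2 : g - 1 - (r : ℕ) < k then
      x ⟨g - 1 - (r : ℕ), hr2⟩ / (d (g - 1 - (r : ℕ)) : K)
    else 0
  map_add' x y := by
    ext r
    simp only [Pi.add_apply]
    split_ifs <;> ring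
  map_smul' c x := by
    ext r
    simp only [Pi.smul_apply, smul_eq_mul, RingHom.id_apply]
    split_ifs <;> ring

section HumbertEmbedding

variable {K : Type*} [Field K] {g k : ℕ} (d : ℕ → ℕ)

theorem humbertEmbedding_apply_castLE (h : k ≤ g) (x : Fin k → K) (i : Fin k) :
    humbertEmbedding K g d x (Fin.castLE h i) = x i := by
  simp [humbertEmbedding]

theorem humbertEmbedding_apply_rev_castLE (hk : k ≤ g) (h : 2 * k ≤ g) (x : Fin k → K)
    (i : Fin k) :
    humbertEmbedding K g d x (Fin.castLE hk i).rev = x i / d i := by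
  have h₁ : ¬ g - (i + 1) < k := by omega
  have h₂ : g - 1 - (g - (i + 1)) = i := by omega
  simp [humbertEmbedding, Fin.val_rev, h₁, h₂]

theorem humbertEmbedding_apply_of_le_of_lt (x : Fin k → K) {r : Fin g} (h₁ : k ≤ r)
    (h₂ : (r : ℕ) < g - k) : humbertEmbedding K g d x r = 0 := by
  have := r.isLt
  simp [humbertEmbedding, dif_neg (show ¬ (r : ℕ) < k by omega),
    dif_neg (show ¬ g - 1 - (r : ℕ) < k by omega)]

theorem humbertEmbedding_injective (h : k ≤ g) :
    Function.Injective (humbertEmbedding K g d : (Fin k → K) →ₗ[K] Fin g → K) :=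
  fun x y hxy => funext fun i => by
    simpa [humbertEmbedding_apply_castLE] using congrFun hxy (Fin.castLE h i)

theorem humbertEmbedding_comp_castLE_eq_self (hk : k ≤ g) (h : 2 * k ≤ g)
    (hd : ∀ i : Fin k, (d i : K) ≠ 0) {v : Fin g → K}
    (hmid : ∀ r : Fin g, k ≤ r → (r : ℕ) < g - k → v r = 0)
    (hrev : ∀ i : Fin k, v (Fin.castLE hk i) = d i * v (Fin.castLE hk i).rev) :
    humbertEmbedding K g d (fun i : Fin k => v (Fin.castLE hk i)) = v := by
  funext r
  rcases Fin.exists_castLE_eq_or_middle_or_exists_rev_castLE_eq hk r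
    with ⟨i, rfl⟩ | ⟨h₁, h₂⟩ | ⟨i, rfl⟩
  · exact humbertEmbedding_apply_castLE d _ _ i
  · exact (humbertEmbedding_apply_of_le_of_lt d _ h₁ h₂).trans (hmid r h₁ h₂).symm
  · refine (humbertEmbedding_apply_rev_castLE d hk h _ i).trans ?_
    rw [hrev, mul_div_cancel_left₀ _ (hd i)]

theorem humbertEmbedding_single (hk : k ≤ g) (h : 2 * k ≤ g)
    (hd : ∀ i : Fin k, (d i : K) ≠ 0) (i : Fin k) :
    humbertEmbedding K g d (Pi.single i (d i : K)) =
      Pi.single (Fin.castLE hk i) (d i : K) + Pi.single (Fin.castLE hk i).rev 1 := by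
  have := i.isLt
  refine (congrArg _ ?_).trans (humbertEmbedding_comp_castLE_eq_self d hk h hd ?_ ?_)
  · ext j
    simp only [Pi.single_apply, Pi.add_apply, Fin.ext_iff, Fin.val_rev, Fin.val_castLE]
    split_ifs <;> first | omega | simp_all
  · intro r h₁ h₂
    simp only [Pi.single_apply, Pi.add_apply, Fin.ext_iff, Fin.val_rev, Fin.val_castLE]
    split_ifs <;> first | omega | simp
  · intro j
    have := j.isLt
    simp only [Pi.single_apply, Pi.add_apply, Fin.ext_iff, Fin.val_rev, Fin.val_castLE]
    split_ifs <;> first | omega | simp_all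

theorem im_humbertEmbedding (x : Fin k → ℂ) (r : Fin g) :
    (humbertEmbedding ℂ g d x r).im = humbertEmbedding ℝ g d (fun i => (x i).im) r := by
  simp only [humbertEmbedding, LinearMap.coe_mk, AddHom.coe_mk]
  split_ifs <;> simp

end HumbertEmbedding

/-- The lattice of the period matrix `[A diag(s)]`; thus `Λ_Z = periodLattice Z 1` and
`Λ_M = periodLattice Z_M d`. -/
def periodLattice {n : Type*} [DecidableEq n] (A : Matrix n n ℂ) (s : n → ℂ) :
    Submodule ℤ (n → ℂ) :=
  Submodule.span ℤ
    (Set.range (fun j => fun i => A i j) ∪ Set.range (fun j => Pi.single j (s j)))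

theorem mem_periodLattice_iff {n : Type*} [Fintype n] [DecidableEq n] {A : Matrix n n ℂ}
    {s : n → ℂ} {v : n → ℂ} :
    v ∈ periodLattice A s ↔
      ∃ a b : n → ℤ, A *ᵥ (fun j => (a j : ℂ)) + (fun i => b i * s i) = v := by
  have hcols (a : n → ℤ) : ∑ j, a j • (fun i => A i j) = A *ᵥ fun j => (a j : ℂ) := by
    ext i; simp [mulVec, dotProduct, Finset.sum_apply, mul_comm]
  have hsingles (b : n → ℤ) :
      ∑ j, b j • Pi.single j (s j) = fun i => (b i : ℂ) * s i := by
    ext i; simp [Finset.sum_apply, Pi.single_apply]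
  simp only [periodLattice, Submodule.span_union, Submodule.mem_sup,
    Submodule.mem_span_range_iff_exists_fun, hcols, hsingles]
  constructor
  · rintro ⟨_, ⟨a, rfl⟩, _, ⟨b, rfl⟩, h⟩
    exact ⟨a, b, h⟩
  · rintro ⟨a, b, h⟩
    exact ⟨_, ⟨a, rfl⟩, _, ⟨b, rfl⟩, h⟩

theorem mem_periodLattice_of_humbertEmbedding_mem {g k : ℕ} {d : ℕ → ℕ} (hk : k ≤ g)
    (h : 2 * k ≤ g) (hd : ∀ i : Fin k, (d i : ℂ) ≠ 0) {Z : Matrix (Fin g) (Fin g) ℂ}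
    (hZs : Z.IsSymm) (hZpos : (Z.map Complex.im).PosDef)
    (hZ : ∀ j : Fin k, humbertEmbedding ℂ g d (fun i : Fin k => Z (Fin.castLE hk i)
      (Fin.castLE hk j)) = fun r => Z r (Fin.castLE hk j))
    {x : Fin k → ℂ} (hx : humbertEmbedding ℂ g d x ∈ periodLattice Z 1) :
    x ∈ periodLattice (Z.submatrix (Fin.castLE hk) (Fin.castLE hk)) fun i => d i := by
  obtain ⟨a, b, hab⟩ := mem_periodLattice_iff.1 hx
  have hY (j : Fin k) : humbertEmbedding ℝ g d (fun i => Z.map Complex.im (Fin.castLE hk i)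
      (Fin.castLE hk j)) = fun r => Z.map Complex.im r (Fin.castLE hk j) := by
    ext r
    simpa only [im_humbertEmbedding, map_apply] using congrArg Complex.im (congrFun (hZ j) r)
  have hYa : Z.map Complex.im *ᵥ (fun j => (a j : ℝ)) =
      humbertEmbedding ℝ g d (fun i => (x i).im) := by
    ext r
    have := congrArg Complex.im (congrFun hab r)
    simpa [mulVec, dotProduct, Complex.im_sum, im_humbertEmbedding] using this
  have ha (r : Fin g) (hr : r ∉ Set.range (Fin.castLE hk)) : (a r : ℂ) = 0 := by
    exact_mod_cast apply_eq_zero_of_mulVec_mem_range (hZs.map _) hZpos.isUnit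
      (Fin.castLE_injective hk) _ (fun x => funext (humbertEmbedding_apply_castLE d hk x)) hY
      ⟨_, hYa.symm⟩ hr
  have hb : humbertEmbedding ℂ g d (x - Z.submatrix (Fin.castLE hk) (Fin.castLE hk) *ᵥ
      ((fun j => (a j : ℂ)) ∘ Fin.castLE hk)) = fun r => (b r : ℂ) := by
    rw [map_sub, ← mulVec_eq_map_submatrix_mulVec (Fin.castLE_injective hk) _ hZ ha, ← hab]
    ext; simp
  refine mem_periodLattice_iff.2 ⟨a ∘ Fin.castLE hk, fun i => b (Fin.castLE hk i).rev, ?_⟩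
  ext i
  have := congrFun hb (Fin.castLE hk i).rev
  rw [humbertEmbedding_apply_rev_castLE d hk h, div_eq_iff (hd i), Pi.sub_apply,
    sub_eq_iff_eq_add'] at this
  exact this.symm

theorem humbertEmbedding_mem_periodLattice {g k : ℕ} {d : ℕ → ℕ} (hk : k ≤ g)
    (h : 2 * k ≤ g) (hd : ∀ i : Fin k, (d i : ℂ) ≠ 0) {Z : Matrix (Fin g) (Fin g) ℂ}
    (hZ : ∀ j : Fin k, humbertEmbedding ℂ g d (fun i : Fin k => Z (Fin.castLE hk i)
      (Fin.castLE hk j)) = fun r => Z r (Fin.castLE hk j))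
    {x : Fin k → ℂ}
    (hx : x ∈ periodLattice (Z.submatrix (Fin.castLE hk) (Fin.castLE hk)) fun i => d i) :
    humbertEmbedding ℂ g d x ∈ periodLattice Z 1 := by
  induction hx using Submodule.span_induction with
  | mem v hv =>
    rcases hv with ⟨j, rfl⟩ | ⟨j, rfl⟩
    · show humbertEmbedding ℂ g d (fun i => Z (Fin.castLE _ i) (Fin.castLE _ j)) ∈ _
      rw [hZ j]
      exact Submodule.subset_span (Or.inl ⟨_, rfl⟩)
    · rw [humbertEmbedding_single d hk h hd j]
      refine add_mem ?_ (Submodule.subset_span (Or.inr ⟨_, rfl⟩))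
      have hsingle : (Pi.single (Fin.castLE hk j) (d j : ℂ) : Fin g → ℂ) =
          (d j : ℤ) • Pi.single (Fin.castLE hk j) ((1 : Fin g → ℂ) (Fin.castLE hk j)) := by
        ext r; simp [Pi.single_apply]
      rw [hsingle]
      refine zsmul_mem ?_ _
      exact Submodule.subset_span (Or.inr ⟨_, rfl⟩)
  | zero => simp
  | add u v _ _ hu hv => rw [map_add]; exact add_mem hu hv
  | smul n v _ hv => rw [map_zsmul]; exact zsmul_mem hv n

/-- Embedding part of the main theorem on equations for the generalised
Humbert locus: if the period matrix `Z ∈ ℍ_g` satisfies the linear equations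
`z_{ij} = d_i z_{(g+1-i)j}` (for `1 ≤ i,j ≤ k`) and `z_{ij} = 0`
(for `k+1 ≤ i ≤ g-k`, `1 ≤ j ≤ k`), then the map
`ι(x)_i = x_i`, `ι(x)_{g+1-i} = x_i/d_i` (`1 ≤ i ≤ k`), other coordinates `0`,
is injective and pulls the lattice `Λ_Z` back to exactly the lattice `Λ_M`
spanned by the columns of the upper-left `k×k` block `Z_M` and the vectors
`d_j e_j`.  (Indices here are 0-based: `i`-th 1-based becomes `i-1`.) -/
theorem humbert_equations_embedding
    (g k : ℕ) (hkg : 2 * k ≤ g)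
    (d : ℕ → ℕ) (hd : ∀ i < k, 0 < d i)
    (Z : Matrix (Fin g) (Fin g) ℂ)
    (hZsymm : Z.IsSymm) (hZpos : (Z.map Complex.im).PosDef)
    (heq1 : ∀ i j : Fin g, (i : ℕ) < k → (j : ℕ) < k →
      Z i j = (d i : ℂ) * Z ⟨g - 1 - (i : ℕ), by omega⟩ j)
    (heq2 : ∀ i j : Fin g, k ≤ (i : ℕ) → (i : ℕ) < g - k → (j : ℕ) < k →
      Z i j = 0) :
    Function.Injective (fun x : Fin k → ℂ => (fun r : Fin g =>
      if hr : (r : ℕ) < k then x ⟨r, hr⟩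
      else if hr2 : g - 1 - (r : ℕ) < k then
        x ⟨g - 1 - (r : ℕ), hr2⟩ / (d (g - 1 - (r : ℕ)) : ℂ)
      else 0)) ∧
    ∀ x : Fin k → ℂ,
      ((fun r : Fin g =>
        if hr : (r : ℕ) < k then x ⟨r, hr⟩
        else if hr2 : g - 1 - (r : ℕ) < k then
          x ⟨g - 1 - (r : ℕ), hr2⟩ / (d (g - 1 - (r : ℕ)) : ℂ)
        else 0) ∈
        Submodule.span ℤ
          (Set.range (fun j : Fin g => fun r : Fin g => Z r j) ∪
           Set.range (fun j : Fin g => (Pi.single j 1 : Fin g → ℂ))))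
      ↔ x ∈ Submodule.span ℤ
          (Set.range (fun j : Fin k => fun i : Fin k =>
            Z (Fin.castLE (by omega) i) (Fin.castLE (by omega) j)) ∪
           Set.range (fun j : Fin k => (Pi.single j (d j : ℂ) : Fin k → ℂ))) := by
  have hdC (i : Fin k) : (d i : ℂ) ≠ 0 := Nat.cast_ne_zero.2 (hd i i.isLt).ne'
  have hk : k ≤ g := by omega
  have hZ (j : Fin k) : humbertEmbedding ℂ g d (fun i : Fin k => Z (Fin.castLE hk i)
      (Fin.castLE hk j)) = fun r => Z r (Fin.castLE hk j) := by
    refine humbertEmbedding_comp_castLE_eq_self d hk hkg hdC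
      (fun r h₁ h₂ => heq2 r _ h₁ h₂ j.isLt) fun i => ?_
    rw [heq1 _ _ i.isLt j.isLt]
    congr 3
    omega
  exact ⟨humbertEmbedding_injective d hk, fun x =>
    ⟨mem_periodLattice_of_humbertEmbedding_mem hk hkg hdC hZsymm hZpos hZ,
      humbertEmbedding_mem_periodLattice hk hkg hdC hZ⟩⟩
end

section
/- Let p be a positive integer and t₂, t₃ ∈ ℂ with Z = [[p·t₂, t₂], [t₂, t₃]] ∈ ℍ₂. Then the set of s ∈ ℂ such that (p·s, s) ∈ Λ_Z is exactly the lattice ℤ·t₂ + ℤ. Consequently the ℂ-linear map ℂ → ℂ², s ↦ (p·s, s), induces an injective homomorphism from the elliptic curve ℂ/(ℤ·t₂ + ℤ) into the complex torus ℂ²/Λ_Z. -/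
/-- For `Z = [[p t₂, t₂],[t₂, t₃]] ∈ ℍ₂`, the set of `s ∈ ℂ` with
`(p s, s) ∈ Λ_Z` is exactly the lattice `ℤ t₂ + ℤ`; hence `s ↦ (p s, s)`
induces an injective homomorphism `ℂ/(ℤt₂+ℤ) → ℂ²/Λ_Z`. -/
theorem elliptic_curve_embeds_diagonally
    (p : ℕ) (hp : 0 < p) (t₂ t₃ : ℂ)
    (hpos : ((!![(p : ℂ) * t₂, t₂; t₂, t₃]).map Complex.im).PosDef) :
    ∀ s : ℂ,
      (![(p : ℂ) * s, s] ∈ Submodule.span ℤ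
        ({![(p : ℂ) * t₂, t₂], ![t₂, t₃], ![1, 0], ![0, 1]} : Set (Fin 2 → ℂ)))
      ↔ s ∈ Submodule.span ℤ ({t₂, 1} : Set ℂ) := by
  have hdet : 0 < ((!![(p : ℂ) * t₂, t₂; t₂, t₃]).map Complex.im).det := hpos.det_pos
  rw [Matrix.det_fin_two] at hdet
  simp only [Matrix.map_apply, Matrix.cons_val', Matrix.cons_val_zero, Matrix.cons_val_one,
    Matrix.head_cons, Matrix.empty_val', Matrix.cons_val_fin_one, Matrix.head_fin_const,
    Matrix.of_apply, Complex.mul_im, Complex.natCast_re, Complex.natCast_im] at hdet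
  have hne : t₂.im - (p : ℝ) * t₃.im ≠ 0 := by
    intro h
    rw [show t₂.im = (p : ℝ) * t₃.im by linarith] at hdet
    nlinarith [hdet]
  intro s
  constructor
  · intro hs
    rw [show ({![(p : ℂ) * t₂, t₂], ![t₂, t₃], ![1, 0], ![0, 1]} : Set (Fin 2 → ℂ)) =
        insert ![(p : ℂ) * t₂, t₂] (insert ![t₂, t₃] (insert ![(1 : ℂ), 0] {![0, 1]})) by rfl]
      at hs
    rw [Submodule.mem_span_insert] at hs
    obtain ⟨a, x, hx, hxe⟩ := hs
    rw [Submodule.mem_span_insert] at hx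
    obtain ⟨b, y, hy, hye⟩ := hx
    rw [Submodule.mem_span_insert] at hy
    obtain ⟨c, z, hz, hze⟩ := hy
    rw [Submodule.mem_span_singleton] at hz
    obtain ⟨d, hd⟩ := hz
    have E : ![(p : ℂ) * s, s] = a • ![(p : ℂ) * t₂, t₂] + (b • ![t₂, t₃] +
        (c • ![(1:ℂ), 0] + d • ![(0:ℂ), 1])) := by
      rw [hxe, hye, hze, ← hd]
    have e0 := congrFun E (0 : Fin 2)
    have e1 := congrFun E (1 : Fin 2)
    simp only [Matrix.cons_val_zero, Matrix.cons_val_one, Matrix.head_cons, Pi.add_apply,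
      Pi.smul_apply, Pi.mul_apply, Pi.intCast_apply, zsmul_eq_mul, mul_one, mul_zero,
      add_zero, zero_add] at e0 e1
    have key : (b : ℂ) * t₂ + (c : ℂ) = (p : ℂ) * ((b : ℂ) * t₃ + (d : ℂ)) := by
      rw [e1] at e0
      linear_combination -e0
    have him : (b : ℝ) * t₂.im = (p : ℝ) * ((b : ℝ) * t₃.im) := by
      have := congrArg Complex.im key
      simpa [Complex.add_im, Complex.mul_im] using this
    have hb : (b : ℝ) = 0 := by
      rcases mul_eq_zero.mp (show (b:ℝ) * (t₂.im - (p:ℝ) * t₃.im) = 0 by nlinarith [him]) with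
        h | h
      · exact h
      · exact absurd h hne
    have hb' : b = 0 := by exact_mod_cast hb
    subst hb'
    rw [Submodule.mem_span_pair]
    exact ⟨a, d, by
      simp only [zsmul_eq_mul, mul_one] at e1 ⊢
      push_cast at e1 ⊢
      linear_combination e1.symm⟩
  · intro hs
    rw [Submodule.mem_span_pair] at hs
    obtain ⟨a, b, hab⟩ := hs
    have hmem : a • ![(p : ℂ) * t₂, t₂] + ((p : ℤ) * b) • ![(1:ℂ), 0] + b • ![(0:ℂ), 1] ∈
        Submodule.span ℤ
          ({![(p : ℂ) * t₂, t₂], ![t₂, t₃], ![1, 0], ![0, 1]} : Set (Fin 2 → ℂ)) := by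
      refine add_mem (add_mem (Submodule.smul_mem _ _ (Submodule.subset_span ?_))
        (Submodule.smul_mem _ _ (Submodule.subset_span ?_)))
        (Submodule.smul_mem _ _ (Submodule.subset_span ?_)) <;> simp
    have hEq : ![(p : ℂ) * s, s] =
        a • ![(p : ℂ) * t₂, t₂] + ((p : ℤ) * b) • ![(1:ℂ), 0] + b • ![(0:ℂ), 1] := by
      funext i
      have hab' : (a : ℂ) * t₂ + (b : ℂ) = s := by
        simp only [zsmul_eq_mul, mul_one] at hab
        push_cast at hab
        linear_combination hab
      fin_cases i <;>
        simp only [Fin.zero_eta, Fin.mk_one, Fin.isValue, Matrix.cons_val_zero,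
          Matrix.cons_val_one, Matrix.head_cons, Pi.add_apply, Pi.smul_apply, Pi.mul_apply,
          Pi.intCast_apply, zsmul_eq_mul, mul_one, mul_zero, add_zero, zero_add] <;>
        push_cast <;>
        first
          | linear_combination ((p : ℂ)) * hab'.symm
          | linear_combination hab'.symm
    rw [hEq]
    exact hmem
end

section
/- Let p be a positive integer and t₂, t₃ ∈ ℂ with Z = [[p·t₂, t₂], [t₂, t₃]] ∈ ℍ₂. Then the set of s ∈ ℂ such that (0, s) ∈ Λ_Z is exactly the lattice ℤ·(p·t₃ − t₂) + ℤ. Consequently the ℂ-linear map ℂ → ℂ², s ↦ (0, s), induces an injective homomorphism from the elliptic curve ℂ/(ℤ·(p·t₃ − t₂) + ℤ) into the complex torus ℂ²/Λ_Z. -/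
/-!
Subtracting `p` times the second column of `Z` from the first gives `(0, t₂ - p t₃)`, so `Λ_Z` is
spanned by `(0, p t₃ - t₂)`, `(t₂, t₃)`, `(1, 0)` and `(0, 1)`. A vector `(0, s)` in it has
first coordinate `b t₂ + c = 0` with `b, c ∈ ℤ`, and since `Im t₂ ≠ 0` (the upper left entry of
`Im Z` is `p Im t₂ > 0`) this forces `b = c = 0`, leaving `s ∈ ℤ (p t₃ - t₂) + ℤ`.
-/

theorem Submodule.mem_span_quadruple {R M : Type*} [Semiring R] [AddCommMonoid M] [Module R M]
    {v w x y z : M} :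
    v ∈ span R ({w, x, y, z} : Set M) ↔ ∃ a b c d : R, a • w + b • x + c • y + d • z = v := by
  rw [mem_span_insert]
  simp_rw [mem_span_triple]
  refine exists_congr fun a ↦ ⟨?_, ?_⟩
  · rintro ⟨u, ⟨b, c, d, rfl⟩, rfl⟩
    exact ⟨b, c, d, by simp only [add_assoc]⟩
  · rintro ⟨b, c, d, rfl⟩
    exact ⟨_, ⟨b, c, d, rfl⟩, by simp only [add_assoc]⟩

theorem Complex.intCast_mul_add_intCast_eq_zero_iff {τ : ℂ} (hτ : τ.im ≠ 0) {m n : ℤ} :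
    (m : ℂ) * τ + n = 0 ↔ m = 0 ∧ n = 0 := by
  refine ⟨fun h ↦ ?_, by rintro ⟨rfl, rfl⟩; simp⟩
  have hm : m = 0 := by
    have him := congrArg Complex.im h
    simp only [add_im, mul_im, intCast_re, intCast_im, zero_mul, add_zero, zero_im] at him
    exact_mod_cast (mul_eq_zero.1 him).resolve_right hτ
  subst hm
  exact ⟨rfl, by simpa using h⟩

theorem complementary_elliptic_curve_embeds_general
    (p : ℕ) (t₂ t₃ : ℂ)
    (hpos : ((!![(p : ℂ) * t₂, t₂; t₂, t₃]).map Complex.im).PosDef) :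
    ∀ s : ℂ,
      (![0, s] ∈ Submodule.span ℤ
        ({![(p : ℂ) * t₂, t₂], ![t₂, t₃], ![1, 0], ![0, 1]} : Set (Fin 2 → ℂ)))
      ↔ s ∈ Submodule.span ℤ ({(p : ℂ) * t₃ - t₂, 1} : Set ℂ) := by
  have hτ : t₂.im ≠ 0 := by
    have h := hpos.diag_pos (i := 0)
    simp only [Matrix.map_apply, Matrix.of_apply, Matrix.cons_val', Matrix.cons_val_zero,
      Matrix.empty_val', Matrix.cons_val_fin_one, Complex.mul_im, Complex.natCast_re,
      Complex.natCast_im, zero_mul, add_zero] at h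
    exact right_ne_zero_of_mul h.ne'
  intro s
  rw [Submodule.mem_span_quadruple, Submodule.mem_span_pair]
  constructor
  · rintro ⟨a, b, c, d, h⟩
    have h₀ := congrFun h 0
    have h₁ := congrFun h 1
    simp only [Matrix.smul_cons, zsmul_eq_mul, Matrix.smul_empty, Matrix.add_cons,
      Matrix.head_cons, Matrix.tail_cons, Matrix.empty_add_empty, mul_one, smul_zero, add_zero,
      Pi.add_apply, Matrix.cons_val_zero, Matrix.cons_val_one, Matrix.cons_val_fin_one] at h₀ h₁
    obtain ⟨hab, -⟩ := (Complex.intCast_mul_add_intCast_eq_zero_iff hτ (m := a * p + b) (n := c)).1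
      (by push_cast; linear_combination h₀)
    refine ⟨-a, d, ?_⟩
    have hab' : (a : ℂ) * p + b = 0 := by exact_mod_cast hab
    simp only [zsmul_eq_mul]
    push_cast
    linear_combination h₁ - t₃ * hab'
  · rintro ⟨m, n, rfl⟩
    refine ⟨-m, m * p, 0, n, ?_⟩
    ext i
    fin_cases i <;> simp [zsmul_eq_mul] <;> ring

/-- For `Z = [[p t₂, t₂],[t₂, t₃]] ∈ ℍ₂`, the set of `s ∈ ℂ` with
`(0, s) ∈ Λ_Z` is exactly the lattice `ℤ(p t₃ − t₂) + ℤ`; hence `s ↦ (0, s)`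
induces an injective homomorphism `ℂ/(ℤ(p t₃ − t₂)+ℤ) → ℂ²/Λ_Z`. -/
theorem complementary_elliptic_curve_embeds
    (p : ℕ) (hp : 0 < p) (t₂ t₃ : ℂ)
    (hpos : ((!![(p : ℂ) * t₂, t₂; t₂, t₃]).map Complex.im).PosDef) :
    ∀ s : ℂ,
      (![0, s] ∈ Submodule.span ℤ
        ({![(p : ℂ) * t₂, t₂], ![t₂, t₃], ![1, 0], ![0, 1]} : Set (Fin 2 → ℂ)))
      ↔ s ∈ Submodule.span ℤ ({(p : ℂ) * t₃ - t₂, 1} : Set ℂ) :=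
  complementary_elliptic_curve_embeds_general p t₂ t₃ hpos
end

section
/- Existence of the symmetric endomorphism in Humbert's theorem: let p be a positive integer and t₂, t₃ ∈ ℂ with Z = [[p·t₂, t₂], [t₂, t₃]] ∈ ℍ₂. Let f be the complex 2×2 matrix [[0, 0], [−1, p]] and let R be the integer 4×4 matrix with rows (0, −1, 0, 0), (0, p, 0, 0), (0, 0, 0, 0), (0, 0, −1, p). Then: (1) f · [Z I₂] = [Z I₂] · R, where [Z I₂] is the 2×4 period matrix; in particular f maps the lattice Λ_Z into itself, so f induces an endomorphism of the torus ℂ²/Λ_Z with analytic representation f and rational representation R; (2) f is symmetric with respect to the principal polarisation, i.e. fᵀ · (Im Z)⁻¹ = (Im Z)⁻¹ · f; and (3) f² = p·f. -/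
open Matrix

/-- Existence of the symmetric endomorphism in Humbert's theorem: for
`Z = [[p t₂, t₂],[t₂, t₃]] ∈ ℍ₂`, the matrix `f = [[0,0],[−1,p]]` satisfies
(1) `f · [Z I₂] = [Z I₂] · R` with `R` the stated integer `4×4` matrix (so `f`
preserves the lattice `Λ_Z` and induces an endomorphism with analytic
representation `f` and rational representation `R`);
(2) `fᵀ (Im Z)⁻¹ = (Im Z)⁻¹ f` (symmetry for the principal polarisation); and
(3) `f² = p·f`. -/
theorem humbert_symmetric_endomorphism
    (p : ℕ) (hp : 0 < p) (t₂ t₃ : ℂ)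
    (hpos : ((!![(p : ℂ) * t₂, t₂; t₂, t₃]).map Complex.im).PosDef) :
    let Z : Matrix (Fin 2) (Fin 2) ℂ := !![(p : ℂ) * t₂, t₂; t₂, t₃]
    let f : Matrix (Fin 2) (Fin 2) ℂ := !![0, 0; -1, (p : ℂ)]
    let P : Matrix (Fin 2) (Fin 4) ℂ := !![(p : ℂ) * t₂, t₂, 1, 0; t₂, t₃, 0, 1]
    let R : Matrix (Fin 4) (Fin 4) ℤ :=
      !![0, -1, 0, 0; 0, (p : ℤ), 0, 0; 0, 0, 0, 0; 0, 0, -1, (p : ℤ)]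
    f * P = P * (R.map fun n : ℤ => (n : ℂ)) ∧
    f.transpose * ((Z.map Complex.im)⁻¹).map (fun r : ℝ => (r : ℂ)) =
      ((Z.map Complex.im)⁻¹).map (fun r : ℝ => (r : ℂ)) * f ∧
    f * f = (p : ℂ) • f := by
  intro Z f P R
  refine ⟨?_, ?_, ?_⟩
  · ext i j
    fin_cases i <;> fin_cases j <;>
      simp [Z, f, P, R, Matrix.mul_apply, Fin.sum_univ_succ] <;> ring
  · have hZ : Z.map Complex.im = !![(p : ℝ) * t₂.im, t₂.im; t₂.im, t₃.im] := by
      ext i j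
      fin_cases i <;> fin_cases j <;> simp [Z]
    rw [hZ, Matrix.inv_def, Matrix.adjugate_fin_two]
    ext i j
    fin_cases i <;> fin_cases j <;>
      simp [f, Matrix.mul_apply, Fin.sum_univ_succ] <;> push_cast <;> ring
  · ext i j
    fin_cases i <;> fin_cases j <;>
      simp [f, Matrix.mul_apply, Fin.sum_univ_succ] <;> ring
end
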